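/- arXiv:1707.03022 — 2 statements merged into one kernel-verified Lean document; each statement's English description precedes it below -/
import Mathlib

section
/- (Third outer recurrence.) For integers m, n, k with m, n ≥ 1 and 0 ≤ k ≤ min(m−1, n−1), and integers i, j with 1 ≤ i ≤ m, 1 ≤ j ≤ n and k+1 ≤ i+j ≤ m+n−k, one has c_{m,n,k}(i, j) = c_{m−1,n,k}(i−1, j) + c_{m,n−1,k}(i, j−1). -/
/-- Binomial coefficient for integer arguments: `C a b = a.choose b` when
`0 ≤ b ≤ a`, and `0` otherwise. -/
def C (a b : ℤ) : ℤ := if 0 ≤ b ∧ b ≤ a then (a.toNat.choose b.toNat : ℤ) else 0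

/-- The coordinate function `c_{m,n,k}(i,j)`. -/
def c (m n k i j : ℤ) : ℤ :=
  ∑ l ∈ Finset.range (k.toNat + 1),
    (-1 : ℤ) ^ l * C (i + j - k) (i - l) * C (m - l) (k - l) * C (n - k + l) l

lemma C_neg (a b : ℤ) (hb : b < 0) : C a b = 0 := by
  unfold C; rw [if_neg]; rintro ⟨h, -⟩; omega

lemma C_pascal (a b : ℤ) (ha : 1 ≤ a) : C a b = C (a-1) (b-1) + C (a-1) b := by
  unfold C
  split_ifs with h1 h2 h3 h4 h5 h6 h7 <;> try omega
  · have e1 : a.toNat = (a-1).toNat + 1 := by omega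
    have e2 : b.toNat = (b-1).toNat + 1 := by omega
    rw [e1, e2, Nat.choose_succ_succ]
    push_cast; ring
  · have e1 : b.toNat = a.toNat := by omega
    have e2 : (b-1).toNat = (a-1).toNat := by omega
    rw [e1, e2, Nat.choose_self, Nat.choose_self]
    ring
  · have e1 : b.toNat = 0 := by omega
    simp [e1]

lemma telescope_sum (T : ℕ → ℤ) (N : ℕ) :
    ∑ l ∈ Finset.range N, (-1:ℤ)^l * (T l + T (l+1)) = T 0 - (-1:ℤ)^N * T N := by
  induction N with
  | zero => simp
  | succ n ih => rw [Finset.sum_range_succ, ih, pow_succ]; ring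

theorem outer_recurrence_third (m n k i j : ℤ)
    (hm : 1 ≤ m) (hn : 1 ≤ n) (hk0 : 0 ≤ k) (hkm : k ≤ m - 1) (hkn : k ≤ n - 1)
    (hi1 : 1 ≤ i) (him : i ≤ m) (hj1 : 1 ≤ j) (hjn : j ≤ n)
    (hij1 : k + 1 ≤ i + j) (hij2 : i + j ≤ m + n - k) :
    c m n k i j = c (m - 1) n k (i - 1) j + c m (n - 1) k i (j - 1) := by
  have hkk : (k.toNat : ℤ) = k := Int.toNat_of_nonneg hk0
  set T : ℕ → ℤ := fun l =>
    C (i + j - k - 1) (i - l) * C (m - l) (k - l) * C (n - k + l - 1) ((l : ℤ) - 1) with hT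
  have key : ∀ l ∈ Finset.range (k.toNat + 1),
      (-1 : ℤ) ^ l * C (i + j - k) (i - l) * C (m - l) (k - l) * C (n - k + l) l
      = (-1 : ℤ) ^ l * C (i - 1 + j - k) (i - 1 - l) * C (m - 1 - l) (k - l) * C (n - k + l) l
        + (-1 : ℤ) ^ l * C (i + (j - 1) - k) (i - l) * C (m - l) (k - l) * C (n - 1 - k + l) l
        + (-1 : ℤ) ^ l * (T l + T (l + 1)) := by
    intro l hl
    have hlk : (l : ℤ) ≤ k := by
      simp only [Finset.mem_range] at hl
      omega
    have h1 := C_pascal (i + j - k) (i - l) (by omega)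
    have h2 := C_pascal (m - l) (k - l) (by omega)
    have h3 := C_pascal (n - k + l) l (by omega)
    have e1 : i - 1 + j - k = i + j - k - 1 := by ring
    have e2 : i - 1 - (l : ℤ) = i - l - 1 := by ring
    have e3 : i + (j - 1) - k = i + j - k - 1 := by ring
    have e4 : m - 1 - (l : ℤ) = m - l - 1 := by ring
    have e5 : n - 1 - k + (l : ℤ) = n - k + l - 1 := by ring
    have e6 : i - ((l : ℤ) + 1) = i - l - 1 := by ring
    have e7 : m - ((l : ℤ) + 1) = m - l - 1 := by ring
    have e8 : k - ((l : ℤ) + 1) = k - l - 1 := by ring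
    have e9 : n - k + ((l : ℤ) + 1) - 1 = n - k + l := by ring
    have e10 : (l : ℤ) + 1 - 1 = l := by ring
    simp only [hT]
    push_cast
    rw [e1, e2, e3, e4, e5, e6, e7, e8, e9, e10, h1, h2, h3]
    ring
  unfold c
  rw [Finset.sum_congr rfl key]
  rw [Finset.sum_add_distrib, Finset.sum_add_distrib]
  rw [telescope_sum]
  have hT0 : T 0 = 0 := by
    have h0 : C (n - k + 0 - 1) (-1) = 0 := C_neg _ _ (by omega)
    simp only [hT]
    push_cast
    rw [h0]
    ring
  have hTK : T (k.toNat + 1) = 0 := by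
    have h0 : C (m - ((k.toNat : ℤ) + 1)) (k - ((k.toNat : ℤ) + 1)) = 0 :=
      C_neg _ _ (by omega)
    simp only [hT]
    push_cast
    rw [h0]
    ring
  rw [hT0, hTK]
  ring
end

section
/- (Racah form of the coordinate formula.) For integers m, n, k with m, n ≥ 0 and 0 ≤ k ≤ min(m, n), and integers i, j with 0 ≤ i ≤ m, 0 ≤ j ≤ n and k ≤ i+j ≤ m+n−k, one has c_{m,n,k}(i, j) = Σ_{l=0}^{k} (-1)^l · C(i+j−k, i−l) · C(m−i, k−l) · C(n−j, l). -/
open Finset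

lemma C_zero_of_neg {a b : ℤ} (h : b < 0) : C a b = 0 := by simp [C]; intro h'; omega
lemma C_zero_of_lt {a b : ℤ} (h : a < b) : C a b = 0 := by simp [C]; intro h'; omega
lemma C_natCast (p q : ℕ) : C (p : ℤ) (q : ℤ) = (p.choose q : ℤ) := by
  unfold C
  by_cases h : q ≤ p
  · simp [h]
  · rw [if_neg (by omega), Nat.choose_eq_zero_of_lt (by omega)]; simp
lemma C_symm {a : ℤ} (ha : 0 ≤ a) (b : ℤ) : C a b = C a (a - b) := by
  unfold C
  by_cases h : 0 ≤ b ∧ b ≤ a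
  · rw [if_pos h, if_pos ⟨by omega, by omega⟩]
    have h1 : (a - b).toNat = a.toNat - b.toNat := by omega
    rw [h1, Nat.choose_symm (by omega)]
  · rw [if_neg h, if_neg (by omega)]
lemma neg_one_pow_sub {I a : ℕ} (h : a ≤ I) : (-1:ℤ)^(I-a) = (-1)^I * (-1)^a := by
  have h1 : (-1:ℤ)^(I-a) * (-1)^a = (-1)^I := by rw [← pow_add]; congr 1; omega
  have h2 : (-1:ℤ)^a * (-1)^a = 1 := by rw [← pow_add, Even.neg_one_pow ⟨a, rfl⟩]
  rw [← h1, mul_assoc, h2, mul_one]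


lemma core (P Q R S A : ℕ) :
    ∑ a ∈ range (A+1), (-1:ℤ)^a * A.choose a * (P+a).choose R * (Q+(A-a)).choose S
    = ∑ a ∈ range (A+1), (-1:ℤ)^a * A.choose a *
        (if a ≤ R then (P.choose (R-a) : ℤ) else 0) *
        (if A - a ≤ S then (Q.choose (S-(A-a)) : ℤ) else 0) := by
  set x : Polynomial (Polynomial ℤ) := Polynomial.C Polynomial.X with hx
  have hE1 : (1+x)^P * (1+Polynomial.X)^Q * (Polynomial.X - x)^A = ∑ a ∈ range (A+1),
      Polynomial.C (Polynomial.C ((-1:ℤ)^a * A.choose a) * (1+Polynomial.X)^(P+a)) *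
        (1+Polynomial.X)^(Q+(A-a)) := by
    rw [show (Polynomial.X - x : Polynomial (Polynomial ℤ)) = -(1+x) + (1+Polynomial.X) by ring,
      add_pow (-(1+x)) (1+Polynomial.X) A, Finset.mul_sum]
    refine Finset.sum_congr rfl fun a ha => ?_
    rw [neg_pow (1+x) a]
    simp only [map_mul, map_pow, map_add, map_one, map_neg, map_natCast, ← hx]
    ring
  have hE2 : (1+x)^P * (1+Polynomial.X)^Q * (Polynomial.X - x)^A = ∑ a ∈ range (A+1),
      Polynomial.C (Polynomial.C ((-1:ℤ)^a * A.choose a) * ((1+Polynomial.X)^P * Polynomial.X^a)) *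
        ((1+Polynomial.X)^Q * Polynomial.X^(A-a)) := by
    rw [show (Polynomial.X - x : Polynomial (Polynomial ℤ)) = -x + Polynomial.X by ring,
      add_pow (-x) Polynomial.X A, Finset.mul_sum]
    refine Finset.sum_congr rfl fun a ha => ?_
    rw [neg_pow x a]
    simp only [map_mul, map_pow, map_add, map_one, map_neg, map_natCast, ← hx]
    ring
  have h1 : ((((1+x)^P * (1+Polynomial.X)^Q * (Polynomial.X - x)^A).coeff S).coeff R) =
      ∑ a ∈ range (A+1), (-1:ℤ)^a * A.choose a * (P+a).choose R * (Q+(A-a)).choose S := by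
    rw [hE1, Polynomial.finset_sum_coeff, Polynomial.finset_sum_coeff]
    refine Finset.sum_congr rfl fun a ha => ?_
    rw [Polynomial.coeff_C_mul, Polynomial.coeff_one_add_X_pow]
    rw [show Polynomial.C ((-1:ℤ)^a * (A.choose a : ℤ)) * (1+Polynomial.X)^(P+a) *
        (((Q+(A-a)).choose S : ℕ) : Polynomial ℤ) =
        Polynomial.C ((-1:ℤ)^a * (A.choose a : ℤ) * (((Q+(A-a)).choose S : ℕ) : ℤ)) *
          (1+Polynomial.X)^(P+a) by
      simp only [map_mul, map_natCast]; ring]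
    rw [Polynomial.coeff_C_mul, Polynomial.coeff_one_add_X_pow]
    push_cast; ring
  have h2 : ((((1+x)^P * (1+Polynomial.X)^Q * (Polynomial.X - x)^A).coeff S).coeff R) =
      ∑ a ∈ range (A+1), (-1:ℤ)^a * A.choose a *
        (if a ≤ R then (P.choose (R-a) : ℤ) else 0) *
        (if A - a ≤ S then (Q.choose (S-(A-a)) : ℤ) else 0) := by
    rw [hE2, Polynomial.finset_sum_coeff, Polynomial.finset_sum_coeff]
    refine Finset.sum_congr rfl fun a ha => ?_
    rw [Polynomial.coeff_C_mul, Polynomial.coeff_mul_X_pow', Polynomial.coeff_one_add_X_pow]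
    rw [mul_ite, mul_zero, apply_ite (fun p => Polynomial.coeff p R), Polynomial.coeff_zero]
    by_cases h : A - a ≤ S
    · rw [if_pos h, if_pos h]
      rw [show Polynomial.C ((-1:ℤ)^a * (A.choose a : ℤ)) * ((1+Polynomial.X)^P * Polynomial.X^a) *
          ((Q.choose (S-(A-a)) : ℕ) : Polynomial ℤ) =
          Polynomial.C ((-1:ℤ)^a * (A.choose a : ℤ) * ((Q.choose (S-(A-a)) : ℕ) : ℤ)) *
            (1+Polynomial.X)^P * Polynomial.X^a by
        simp only [map_mul, map_natCast]; ring]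
      rw [Polynomial.coeff_mul_X_pow', Polynomial.coeff_C_mul, Polynomial.coeff_one_add_X_pow]
      by_cases h' : a ≤ R
      · rw [if_pos h', if_pos h']; push_cast; ring
      · rw [if_neg h', if_neg h']; ring
    · rw [if_neg h, if_neg h]; ring
  rw [← h1, h2]

lemma lhs_chain (M N K I J A : ℕ) (hKM : K ≤ M) (hKN : K ≤ N) (hIM : I ≤ M) (hJN : J ≤ N)
    (hA : I + J = K + A) :
    (∑ l ∈ range (K+1), (-1:ℤ)^l * C A (I - l) * C ((M:ℤ) - l) ((K:ℤ) - l) * C ((N:ℤ) - K + l) l)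
    = (-1:ℤ)^I * ∑ a ∈ range (A+1),
        (-1:ℤ)^a * (A.choose a) * ((M-I+a).choose (M-K)) * ((N-J+(A-a)).choose (N-K)) := by
  calc
    (∑ l ∈ range (K+1), (-1:ℤ)^l * C A (I - l) * C ((M:ℤ) - l) ((K:ℤ) - l) * C ((N:ℤ) - K + l) l)
      = ∑ l ∈ range (I+K+1), (-1:ℤ)^l * C A (I - l) * C ((M:ℤ) - l) ((K:ℤ) - l)
          * C ((N:ℤ) - K + l) l := by
        refine Finset.sum_subset (Finset.range_subset_range.mpr (by omega)) fun l _ hl => ?_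
        simp only [Finset.mem_range, not_lt] at hl
        rw [C_zero_of_neg (show (K:ℤ) - l < 0 by omega)]; ring
    _ = ∑ l ∈ range (I+K+1), (-1:ℤ)^l * C A (I - l) * C ((M:ℤ) - l) ((M:ℤ) - K)
          * C ((N:ℤ) - K + l) ((N:ℤ) - K) := by
        refine Finset.sum_congr rfl fun l _ => ?_
        have e2 : C ((N:ℤ) - K + l) (l:ℤ) = C ((N:ℤ) - K + l) ((N:ℤ) - K) := by
          rw [C_symm (by omega) (l:ℤ), show ((N:ℤ) - K + l) - l = (N:ℤ) - K by ring]
        by_cases h : l ≤ M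
        · rw [C_symm (show (0:ℤ) ≤ (M:ℤ) - l by omega) ((K:ℤ) - l),
            show ((M:ℤ) - l) - ((K:ℤ) - l) = (M:ℤ) - K by ring, e2]
        · rw [C_zero_of_neg (show (K:ℤ) - l < 0 by omega),
            C_zero_of_lt (show (M:ℤ) - l < (M:ℤ) - K by omega), e2]
    _ = ∑ l ∈ range (I+1), (-1:ℤ)^l * C A (I - l) * C ((M:ℤ) - l) ((M:ℤ) - K)
          * C ((N:ℤ) - K + l) ((N:ℤ) - K) := by
        refine (Finset.sum_subset (Finset.range_subset_range.mpr (by omega)) fun l _ hl => ?_).symm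
        simp only [Finset.mem_range, not_lt] at hl
        rw [C_zero_of_neg (show (I:ℤ) - l < 0 by omega)]; ring
    _ = ∑ a ∈ range (I+1), (-1:ℤ)^(I-a) * C A (I - (I-a : ℕ)) * C ((M:ℤ) - (I-a : ℕ)) ((M:ℤ) - K)
          * C ((N:ℤ) - K + (I-a : ℕ)) ((N:ℤ) - K) := by
        rw [← Finset.sum_range_reflect]
        simp only [Nat.add_sub_cancel]
    _ = ∑ a ∈ range (I+1), (-1:ℤ)^I *
          ((-1:ℤ)^a * (A.choose a) * ((M-I+a).choose (M-K)) * ((N-J+(A-a)).choose (N-K))) := by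
        refine Finset.sum_congr rfl fun a ha => ?_
        simp only [Finset.mem_range] at ha
        have ha' : a ≤ I := by omega
        rw [neg_one_pow_sub ha']
        rw [show ((I:ℤ) - (I-a : ℕ)) = (a:ℤ) by omega]
        by_cases hA' : a ≤ A
        · rw [show ((M:ℤ) - (I-a : ℕ)) = ((M-I+a : ℕ) : ℤ) by omega,
            show ((M:ℤ) - K) = ((M-K : ℕ) : ℤ) by omega,
            show ((N:ℤ) - K + (I-a : ℕ)) = ((N-J+(A-a) : ℕ) : ℤ) by omega,
            show ((N:ℤ) - K) = ((N-K : ℕ) : ℤ) by omega,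
            C_natCast, C_natCast, C_natCast]
          ring
        · rw [C_zero_of_lt (show (A:ℤ) < (a:ℤ) by omega),
            Nat.choose_eq_zero_of_lt (show A < a by omega)]
          push_cast; ring
    _ = ∑ a ∈ range (I+A+1), (-1:ℤ)^I *
          ((-1:ℤ)^a * (A.choose a) * ((M-I+a).choose (M-K)) * ((N-J+(A-a)).choose (N-K))) := by
        refine Finset.sum_subset (Finset.range_subset_range.mpr (by omega)) fun a _ ha => ?_
        simp only [Finset.mem_range, not_lt] at ha
        by_cases hA' : a ≤ A
        · rw [Nat.choose_eq_zero_of_lt (show N-J+(A-a) < N-K by omega)]; push_cast; ring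
        · rw [Nat.choose_eq_zero_of_lt (show A < a by omega)]; push_cast; ring
    _ = ∑ a ∈ range (A+1), (-1:ℤ)^I *
          ((-1:ℤ)^a * (A.choose a) * ((M-I+a).choose (M-K)) * ((N-J+(A-a)).choose (N-K))) := by
        refine (Finset.sum_subset (Finset.range_subset_range.mpr (by omega)) fun a _ ha => ?_).symm
        simp only [Finset.mem_range, not_lt] at ha
        rw [Nat.choose_eq_zero_of_lt (show A < a by omega)]; push_cast; ring
    _ = (-1:ℤ)^I * ∑ a ∈ range (A+1),
        (-1:ℤ)^a * (A.choose a) * ((M-I+a).choose (M-K)) * ((N-J+(A-a)).choose (N-K)) := by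
        rw [Finset.mul_sum]


lemma rhs_chain (M N K I J A : ℕ) (hKM : K ≤ M) (hKN : K ≤ N) (hIM : I ≤ M) (hJN : J ≤ N)
    (hA : I + J = K + A) :
    (∑ l ∈ range (K+1), (-1:ℤ)^l * C A (I - l) * C ((M:ℤ) - I) ((K:ℤ) - l) * C ((N:ℤ) - J) l)
    = (-1:ℤ)^I * ∑ a ∈ range (A+1),
        (-1:ℤ)^a * (A.choose a) *
          (if a ≤ M-K then (((M-I).choose (M-K-a)) : ℤ) else 0) *
          (if A - a ≤ N-K then (((N-J).choose (N-K-(A-a))) : ℤ) else 0) := by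
  calc
    (∑ l ∈ range (K+1), (-1:ℤ)^l * C A (I - l) * C ((M:ℤ) - I) ((K:ℤ) - l) * C ((N:ℤ) - J) l)
      = ∑ l ∈ range (I+K+1), (-1:ℤ)^l * C A (I - l) * C ((M:ℤ) - I) ((K:ℤ) - l)
          * C ((N:ℤ) - J) l := by
        refine Finset.sum_subset (Finset.range_subset_range.mpr (by omega)) fun l _ hl => ?_
        simp only [Finset.mem_range, not_lt] at hl
        rw [C_zero_of_neg (show (K:ℤ) - l < 0 by omega)]; ring
    _ = ∑ l ∈ range (I+1), (-1:ℤ)^l * C A (I - l) * C ((M:ℤ) - I) ((K:ℤ) - l)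
          * C ((N:ℤ) - J) l := by
        refine (Finset.sum_subset (Finset.range_subset_range.mpr (by omega)) fun l _ hl => ?_).symm
        simp only [Finset.mem_range, not_lt] at hl
        rw [C_zero_of_neg (show (I:ℤ) - l < 0 by omega)]; ring
    _ = ∑ a ∈ range (I+1), (-1:ℤ)^(I-a) * C A (I - (I-a : ℕ)) * C ((M:ℤ) - I) ((K:ℤ) - (I-a : ℕ))
          * C ((N:ℤ) - J) (I-a : ℕ) := by
        rw [← Finset.sum_range_reflect]
        simp only [Nat.add_sub_cancel]
    _ = ∑ a ∈ range (I+1), (-1:ℤ)^I *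
          ((-1:ℤ)^a * (A.choose a) *
            (if a ≤ M-K then (((M-I).choose (M-K-a)) : ℤ) else 0) *
            (if A - a ≤ N-K then (((N-J).choose (N-K-(A-a))) : ℤ) else 0)) := by
        refine Finset.sum_congr rfl fun a ha => ?_
        simp only [Finset.mem_range] at ha
        have ha' : a ≤ I := by omega
        rw [neg_one_pow_sub ha']
        rw [show ((I:ℤ) - (I-a : ℕ)) = (a:ℤ) by omega]
        by_cases hA' : a ≤ A
        · have e1 : C ((M:ℤ) - I) ((K:ℤ) - (I-a : ℕ)) =
              (if a ≤ M-K then (((M-I).choose (M-K-a)) : ℤ) else 0) := by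
            rw [C_symm (show (0:ℤ) ≤ (M:ℤ) - I by omega) ((K:ℤ) - (I-a : ℕ))]
            by_cases h : a ≤ M-K
            · rw [if_pos h, show ((M:ℤ) - I) - ((K:ℤ) - (I-a : ℕ)) = ((M-K-a : ℕ) : ℤ) by omega,
                show ((M:ℤ) - I) = ((M-I : ℕ) : ℤ) by omega, C_natCast]
            · rw [if_neg h, C_zero_of_neg (show ((M:ℤ) - I) - ((K:ℤ) - (I-a : ℕ)) < 0 by omega)]
          have e2 : C ((N:ℤ) - J) ((I-a : ℕ) : ℤ) =
              (if A - a ≤ N-K then (((N-J).choose (N-K-(A-a))) : ℤ) else 0) := by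
            rw [C_symm (show (0:ℤ) ≤ (N:ℤ) - J by omega) ((I-a : ℕ) : ℤ)]
            by_cases h : A - a ≤ N-K
            · rw [if_pos h, show ((N:ℤ) - J) - ((I-a : ℕ) : ℤ) = ((N-K-(A-a) : ℕ) : ℤ) by omega,
                show ((N:ℤ) - J) = ((N-J : ℕ) : ℤ) by omega, C_natCast]
            · rw [if_neg h, C_zero_of_neg (show ((N:ℤ) - J) - ((I-a : ℕ) : ℤ) < 0 by omega)]
          rw [e1, e2, show ((A:ℕ) : ℤ) = ((A:ℕ) : ℤ) from rfl, C_natCast]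
          ring
        · rw [C_zero_of_lt (show (A:ℤ) < (a:ℤ) by omega),
            Nat.choose_eq_zero_of_lt (show A < a by omega)]
          push_cast; ring
    _ = ∑ a ∈ range (I+A+1), (-1:ℤ)^I *
          ((-1:ℤ)^a * (A.choose a) *
            (if a ≤ M-K then (((M-I).choose (M-K-a)) : ℤ) else 0) *
            (if A - a ≤ N-K then (((N-J).choose (N-K-(A-a))) : ℤ) else 0)) := by
        refine Finset.sum_subset (Finset.range_subset_range.mpr (by omega)) fun a _ ha => ?_
        simp only [Finset.mem_range, not_lt] at ha
        by_cases hA' : a ≤ A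
        · rw [if_pos (show A - a ≤ N-K by omega),
            Nat.choose_eq_zero_of_lt (show N-J < N-K-(A-a) by omega)]
          push_cast; ring
        · rw [Nat.choose_eq_zero_of_lt (show A < a by omega)]; push_cast; ring
    _ = ∑ a ∈ range (A+1), (-1:ℤ)^I *
          ((-1:ℤ)^a * (A.choose a) *
            (if a ≤ M-K then (((M-I).choose (M-K-a)) : ℤ) else 0) *
            (if A - a ≤ N-K then (((N-J).choose (N-K-(A-a))) : ℤ) else 0)) := by
        refine (Finset.sum_subset (Finset.range_subset_range.mpr (by omega)) fun a _ ha => ?_).symm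
        simp only [Finset.mem_range, not_lt] at ha
        rw [Nat.choose_eq_zero_of_lt (show A < a by omega)]; push_cast; ring
    _ = (-1:ℤ)^I * ∑ a ∈ range (A+1),
        (-1:ℤ)^a * (A.choose a) *
          (if a ≤ M-K then (((M-I).choose (M-K-a)) : ℤ) else 0) *
          (if A - a ≤ N-K then (((N-J).choose (N-K-(A-a))) : ℤ) else 0) := by
        rw [Finset.mul_sum]


theorem racah_form (m n k i j : ℤ)
    (hm : 0 ≤ m) (hn : 0 ≤ n) (hk0 : 0 ≤ k) (hkm : k ≤ m) (hkn : k ≤ n)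
    (hi0 : 0 ≤ i) (him : i ≤ m) (hj0 : 0 ≤ j) (hjn : j ≤ n)
    (hij1 : k ≤ i + j) (hij2 : i + j ≤ m + n - k) :
    c m n k i j =
    ∑ l ∈ Finset.range (k.toNat + 1),
      (-1 : ℤ) ^ l * C (i + j - k) (i - l) * C (m - i) (k - l) * C (n - j) l := by
  lift m to ℕ using hm with M
  lift n to ℕ using hn with N
  lift k to ℕ using hk0 with K
  lift i to ℕ using hi0 with I
  lift j to ℕ using hj0 with J
  obtain ⟨A, hA⟩ : ∃ A : ℕ, I + J = K + A := ⟨I + J - K, by omega⟩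
  have hKM : K ≤ M := by exact_mod_cast hkm
  have hKN : K ≤ N := by exact_mod_cast hkn
  have hIM : I ≤ M := by exact_mod_cast him
  have hJN : J ≤ N := by exact_mod_cast hjn
  unfold c
  rw [show ((K:ℤ)).toNat = K from Int.toNat_natCast K]
  rw [show ((I:ℤ) + J - K) = ((A:ℕ) : ℤ) by omega]
  rw [lhs_chain M N K I J A hKM hKN hIM hJN hA,
    rhs_chain M N K I J A hKM hKN hIM hJN hA,
    core (M-I) (N-J) (M-K) (N-K) A]
end
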